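/- arXiv:1508.01507 — 5 statements merged into one kernel-verified Lean document; each statement's English description precedes it below -/
import Mathlib

section
/- Let T be a weighted tree (a connected acyclic graph) with nonzero real edge weights. Then the number of positive eigenvalues of the Laplacian L_T = -B D Bᵀ equals the number of edges of T with negative weight. -/
/-!
Writing `L = B · diag(-γ) · Bᵀ`, the quadratic form of `L` is `x ↦ Σₑ (-γₑ) (Bᵀx)ₑ²`, i.e. the
pull-back of the diagonal form `diag(-γ)` along `Bᵀ`. For a tree `Bᵀ` is surjective: its kernel
consists of the constant vectors and there are exactly `|V| - 1` edges. Pulling back along a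
surjection preserves the positive index of inertia, so by Sylvester's law the number of positive
eigenvalues of `L` equals the number of positive entries of `-γ`.
-/

open Matrix QuadraticMap QuadraticForm

section Signature

variable {V W : Type*} [AddCommGroup V] [Module ℝ V] [FiniteDimensional ℝ V]
  [AddCommGroup W] [Module ℝ W] [FiniteDimensional ℝ W]

theorem QuadraticForm.sigPos_comp_le (Q : QuadraticForm ℝ W) (f : V →ₗ[ℝ] W) :
    sigPos (Q.comp f) ≤ sigPos Q := by
  obtain ⟨U, hrank, hU⟩ := exists_finrank_eq_sigPos_and_posDef (Q.comp f)
  have hinj : Function.Injective (f.domRestrict U) := by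
    refine (injective_iff_map_eq_zero _).2 fun x hx => ?_
    by_contra hx0
    have hfx : f x = 0 := hx
    simpa [hfx] using hU x hx0
  have hmap : (Q.restrict (U.map f)).PosDef := by
    rintro ⟨_, x, hx, rfl⟩ hx0
    exact hU ⟨x, hx⟩ fun h => hx0 (by simp [(Submodule.mk_eq_zero _ _).1 h])
  calc sigPos (Q.comp f) = Module.finrank ℝ (U.map f) := by
        rw [← hrank, ← LinearMap.range_domRestrict, LinearMap.finrank_range_of_inj hinj]
    _ ≤ sigPos Q := le_sigPos_of_posDef Q hmap

theorem QuadraticForm.sigPos_comp_of_surjective (Q : QuadraticForm ℝ W) {f : V →ₗ[ℝ] W}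
    (hf : Function.Surjective f) : sigPos (Q.comp f) = sigPos Q := by
  obtain ⟨g, hg⟩ := f.exists_rightInverse_of_surjective (LinearMap.range_eq_top.2 hf)
  have hQ : (Q.comp f).comp g = Q := by
    ext x
    simp only [QuadraticMap.comp_apply, ← LinearMap.comp_apply, hg, LinearMap.id_apply]
  refine le_antisymm (Q.sigPos_comp_le f) ?_
  calc sigPos Q = sigPos ((Q.comp f).comp g) := by rw [hQ]
    _ ≤ sigPos (Q.comp f) := sigPos_comp_le (Q.comp f) g

end Signature

section MatrixForm

variable {ι κ : Type*} [Fintype ι] [DecidableEq ι] [Fintype κ] [DecidableEq κ]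

theorem Matrix.toQuadraticForm'_apply (M : Matrix ι ι ℝ) (x : ι → ℝ) :
    M.toQuadraticForm' x = x ⬝ᵥ M *ᵥ x := by
  simp [toQuadraticForm', toLinearMap₂'_apply']

theorem Matrix.toQuadraticForm'_diagonal (d : ι → ℝ) :
    (diagonal d).toQuadraticForm' = weightedSumSquares ℝ d := by
  ext x
  simp only [toQuadraticForm'_apply, weightedSumSquares_apply, dotProduct, mulVec_diagonal,
    smul_eq_mul]
  exact Finset.sum_congr rfl fun i _ => by ring

theorem Matrix.toQuadraticForm'_mul_mul_transpose (A : Matrix ι κ ℝ) (M : Matrix κ κ ℝ) :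
    (A * M * Aᵀ).toQuadraticForm' = M.toQuadraticForm'.comp Aᵀ.mulVecLin := by
  ext x
  rw [toQuadraticForm'_apply, QuadraticMap.comp_apply, mulVecLin_apply, toQuadraticForm'_apply,
    ← mulVec_mulVec, ← mulVec_mulVec, dotProduct_mulVec, ← mulVec_transpose]

theorem Matrix.sigPos_toQuadraticForm'_mul_diagonal_mul_transpose {A : Matrix ι κ ℝ}
    (hA : Function.Surjective Aᵀ.mulVec) (d : κ → ℝ) :
    sigPos (A * diagonal d * Aᵀ).toQuadraticForm' = (Finset.univ.filter fun k => 0 < d k).card := by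
  rw [toQuadraticForm'_mul_mul_transpose, sigPos_comp_of_surjective _ hA,
    toQuadraticForm'_diagonal, sigPos_weightedSumSquares, ← Finset.coe_filter_univ,
    Set.ncard_coe_finset]

theorem Matrix.IsHermitian.sigPos_toQuadraticForm' {A : Matrix ι ι ℝ} (hA : A.IsHermitian) :
    sigPos A.toQuadraticForm' = (Finset.univ.filter fun i => 0 < hA.eigenvalues i).card := by
  set U : Matrix ι ι ℝ := (hA.eigenvectorUnitary : Matrix ι ι ℝ)
  have hU : Uᵀ * U = 1 := by
    simpa [star_eq_conjTranspose] using Unitary.star_mul_self_of_mem hA.eigenvectorUnitary.2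
  have hsurj : Function.Surjective Uᵀ.mulVec :=
    fun y => ⟨U *ᵥ y, by rw [mulVec_mulVec, hU, one_mulVec]⟩
  have hA' : A = U * diagonal hA.eigenvalues * Uᵀ := by
    simpa [star_eq_conjTranspose] using hA.spectral_theorem
  rw [← sigPos_toQuadraticForm'_mul_diagonal_mul_transpose hsurj, ← hA']

end MatrixForm

section Incidence

variable {V E : Type*} (tail head : E → V)

def underlyingGraph : SimpleGraph V :=
  SimpleGraph.fromRel fun v w => ∃ e, tail e = v ∧ head e = w

def signedIncidenceMatrix [DecidableEq V] : Matrix V E ℝ :=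
  Matrix.of fun v e => if v = tail e then 1 else if v = head e then -1 else 0

variable {tail head}

theorem underlyingGraph_adj {v w : V} : (underlyingGraph tail head).Adj v w ↔
    v ≠ w ∧ ((∃ e, tail e = v ∧ head e = w) ∨ ∃ e, tail e = w ∧ head e = v) :=
  SimpleGraph.fromRel_adj _ _ _

theorem transpose_signedIncidenceMatrix_mulVec [Fintype V] [DecidableEq V]
    (hloop : ∀ e, tail e ≠ head e) (x : V → ℝ) :
    (signedIncidenceMatrix tail head)ᵀ *ᵥ x = fun e => x (tail e) - x (head e) := by
  ext e
  have hentry : ∀ v, (if v = tail e then (1 : ℝ) else if v = head e then -1 else 0)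
      = (if v = tail e then 1 else 0) - (if v = head e then 1 else 0) := by
    intro v
    have hne := hloop e
    split_ifs <;> grind
  simp only [mulVec, dotProduct, transpose_apply, signedIncidenceMatrix, of_apply, hentry, sub_mul,
    Finset.sum_sub_distrib, ite_mul, one_mul, zero_mul, Finset.sum_ite_eq', Finset.mem_univ,
    if_true]

theorem apply_eq_of_forall_tail_head {α : Type*} (hconn : (underlyingGraph tail head).Connected)
    {x : V → α} (hx : ∀ e, x (tail e) = x (head e)) (v w : V) : x v = x w := by
  induction (hconn v w).some with
  | nil => rfl
  | cons hadj _ ih =>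
    obtain ⟨-, ⟨e, rfl, rfl⟩ | ⟨e, rfl, rfl⟩⟩ := underlyingGraph_adj.1 hadj
    · rw [hx e, ih]
    · rw [← hx e, ih]

theorem card_add_one_eq_of_isTree [Fintype V] [DecidableEq V] [Fintype E]
    (hloop : ∀ e, tail e ≠ head e)
    (hsimple : ∀ e f, ({tail e, head e} : Finset V) = {tail f, head f} → e = f)
    (htree : (underlyingGraph tail head).IsTree) : Fintype.card E + 1 = Fintype.card V := by
  classical
  let edge : E → (underlyingGraph tail head).edgeSet := fun e =>
    ⟨s(tail e, head e), underlyingGraph_adj.2 ⟨hloop e, .inl ⟨e, rfl, rfl⟩⟩⟩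
  have hbij : Function.Bijective edge := by
    constructor
    · intro e f hef
      apply hsimple
      rcases Sym2.eq_iff.1 (Subtype.ext_iff.1 hef) with ⟨h1, h2⟩ | ⟨h1, h2⟩
      · rw [h1, h2]
      · rw [h1, h2, Finset.pair_comm]
    · rintro ⟨z, hz⟩
      induction z with
      | h v w =>
        obtain ⟨-, ⟨e, rfl, rfl⟩ | ⟨e, rfl, rfl⟩⟩ := underlyingGraph_adj.1 hz
        · exact ⟨e, rfl⟩
        · exact ⟨e, Subtype.ext Sym2.eq_swap⟩
  rw [← htree.card_edgeFinset, SimpleGraph.edgeFinset_card, Fintype.card_of_bijective hbij]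

theorem surjective_mulVec_transpose_signedIncidenceMatrix [Fintype V] [DecidableEq V] [Fintype E]
    (hloop : ∀ e, tail e ≠ head e)
    (hsimple : ∀ e f, ({tail e, head e} : Finset V) = {tail f, head f} → e = f)
    (htree : (underlyingGraph tail head).IsTree) :
    Function.Surjective (signedIncidenceMatrix tail head)ᵀ.mulVec := by
  set g := (signedIncidenceMatrix tail head)ᵀ.mulVecLin
  have hker : LinearMap.ker g ≤ Submodule.span ℝ {fun _ => 1} := by
    intro x hx
    obtain ⟨v₀⟩ := htree.connected.nonempty
    have hedge : ∀ e, x (tail e) = x (head e) := fun e => sub_eq_zero.1 <|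
      congrFun ((transpose_signedIncidenceMatrix_mulVec hloop x).symm.trans hx) e
    exact Submodule.mem_span_singleton.2
      ⟨x v₀, funext fun v => by simp [apply_eq_of_forall_tail_head htree.connected hedge v v₀]⟩
  have hrank := g.finrank_range_add_finrank_ker
  have hker_le : Module.finrank ℝ (LinearMap.ker g) ≤ 1 :=
    (Submodule.finrank_mono hker).trans ((finrank_span_le_card _).trans (by simp))
  rw [Module.finrank_fintype_fun_eq_card, ← card_add_one_eq_of_isTree hloop hsimple htree] at hrank
  change Function.Surjective g
  rw [← LinearMap.range_eq_top]
  apply Submodule.eq_top_of_finrank_eq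
  have := Submodule.finrank_le (LinearMap.range g)
  rw [Module.finrank_fintype_fun_eq_card] at this ⊢
  omega

end Incidence

theorem tree_index_eq_neg_edges_general
    (n m : ℕ) (tail head : Fin m → Fin n) (γ : Fin m → ℝ)
    (hloop : ∀ e, tail e ≠ head e)
    (hsimple : ∀ e f : Fin m,
      ({tail e, head e} : Finset (Fin n)) = {tail f, head f} → e = f)
    (hconn : (SimpleGraph.fromRel (fun v w => ∃ e, tail e = v ∧ head e = w)).Connected)
    (hacyc : (SimpleGraph.fromRel (fun v w => ∃ e, tail e = v ∧ head e = w)).IsAcyclic)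
    (B : Matrix (Fin n) (Fin m) ℝ)
    (hB : ∀ v e, B v e = if v = tail e then 1 else if v = head e then -1 else 0)
    (L : Matrix (Fin n) (Fin n) ℝ)
    (hLdef : L = -(B * Matrix.diagonal γ * Bᵀ))
    (hL : L.IsHermitian) :
    (Finset.univ.filter fun i => 0 < hL.eigenvalues i).card
      = (Finset.univ.filter fun e => γ e < 0).card := by
  have hsurj : Function.Surjective Bᵀ.mulVec := by
    rw [show B = signedIncidenceMatrix tail head from Matrix.ext hB]
    exact surjective_mulVec_transpose_signedIncidenceMatrix hloop hsimple ⟨hconn, hacyc⟩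
  have hL' : L = B * diagonal (-γ) * Bᵀ := by
    rw [hLdef, ← Matrix.neg_mul, ← Matrix.mul_neg, diagonal_neg]; rfl
  rw [← hL.sigPos_toQuadraticForm', hL', sigPos_toQuadraticForm'_mul_diagonal_mul_transpose hsurj]
  simp only [Pi.neg_apply, neg_pos]

/-- For a weighted tree (connected and acyclic graph) with nonzero edge weights, the number of
positive eigenvalues of the Laplacian `L = -B D Bᵀ` (counted with multiplicity) equals the
number of negatively-weighted edges. -/
theorem tree_index_eq_neg_edges
    (n m : ℕ) (tail head : Fin m → Fin n) (γ : Fin m → ℝ)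
    (hγ : ∀ e, γ e ≠ 0)
    (hloop : ∀ e, tail e ≠ head e)
    (hsimple : ∀ e f : Fin m,
      ({tail e, head e} : Finset (Fin n)) = {tail f, head f} → e = f)
    (hconn : (SimpleGraph.fromRel (fun v w => ∃ e, tail e = v ∧ head e = w)).Connected)
    (hacyc : (SimpleGraph.fromRel (fun v w => ∃ e, tail e = v ∧ head e = w)).IsAcyclic)
    (B : Matrix (Fin n) (Fin m) ℝ)
    (hB : ∀ v e, B v e = if v = tail e then 1 else if v = head e then -1 else 0)
    (L : Matrix (Fin n) (Fin n) ℝ)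
    (hLdef : L = -(B * Matrix.diagonal γ * Bᵀ))
    (hL : L.IsHermitian) :
    (Finset.univ.filter fun i => 0 < hL.eigenvalues i).card
      = (Finset.univ.filter fun e => γ e < 0).card :=
  tree_index_eq_neg_edges_general n m tail head γ hloop hsimple hconn hacyc B hB L hLdef hL
end

section
/- (Haynsworth inertia additivity) Let M be a nonsingular N×N Hermitian matrix, S a subspace of ℝ^N with orthogonal projection P_S, and suppose M|_S = P_S M P_S restricted to S is nonsingular. Then n_+(M) = n_+(M|_S) + n_+((M⁻¹)|_{S⊥}), where n_+ denotes the number of positive eigenvalues counted with multiplicity. -/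
/-!
Choose an orthonormal basis of `ℝ^N` adapted to `S ⊕ S⊥` (the columns of `X` and `X'`). In it `M`
becomes a symmetric block matrix `[[A, B], [Bᵀ, D]]` with `A = M|_S` invertible, and block
elimination makes it congruent to `diag(A, D - Bᵀ A⁻¹ B)`. The inverse of the same block matrix
has `(M⁻¹)|_{S⊥}` as its lower-right block, and that block is the inverse of the Schur complement
`D - Bᵀ A⁻¹ B`, hence congruent to it. Sylvester's law of inertia turns these congruences into the
count of positive eigenvalues.
-/

open Finset Matrix Module

namespace Pi

variable (K : Type*) {ι : Type*} [Field K]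

def supported (s : Set ι) : Submodule K (ι → K) :=
  ⨅ i ∈ sᶜ, LinearMap.ker (LinearMap.proj i)

variable {K}

theorem mem_supported {s : Set ι} {x : ι → K} : x ∈ supported K s ↔ ∀ i ∉ s, x i = 0 := by
  simp [supported]

theorem finrank_supported [Fintype ι] [DecidableEq ι] (s : Finset ι) :
    finrank K (supported K (s : Set ι)) = #s := by
  unfold supported
  rw [(LinearMap.iInfKerProjEquiv K (fun _ : ι => K) (disjoint_compl_right (a := (s : Set ι)))
    (by simp)).finrank_eq]
  simp

end Pi

namespace Matrix

variable {ι κ μ ν R : Type*} [Fintype ι]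

section Blocks

variable [CommRing R]

theorem transpose_fromCols_mul_mul_fromCols (P : Matrix ι ι R) (X : Matrix ι κ R)
    (X' : Matrix ι μ R) :
    (fromCols X X')ᵀ * P * fromCols X X' =
      fromBlocks (Xᵀ * P * X) (Xᵀ * P * X') (X'ᵀ * P * X) (X'ᵀ * P * X') := by
  rw [transpose_fromCols, fromRows_mul, fromRows_mul_fromCols]

theorem transpose_fromCols_mul_fromCols_eq_one [DecidableEq κ] [DecidableEq μ]
    {X : Matrix ι κ R} {X' : Matrix ι μ R} (hX : Xᵀ * X = 1) (hX' : X'ᵀ * X' = 1)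
    (hXX' : Xᵀ * X' = 0) : (fromCols X X')ᵀ * fromCols X X' = 1 := by
  have hX'X : X'ᵀ * X = 0 := by simpa [transpose_mul] using congrArg transpose hXX'
  rw [transpose_fromCols, fromRows_mul_fromCols, hX, hX', hXX', hX'X, fromBlocks_one]

end Blocks

variable [Fintype κ]

theorem transpose_mul_mul_mul_transpose_mul_inv_mul [DecidableEq ι] [DecidableEq κ]
    [CommRing R] {Q : Matrix ι κ R} (hQ : Qᵀ * Q = 1) (hQ' : Q * Qᵀ = 1) {M : Matrix ι ι R}
    (hM : IsUnit M.det) : Qᵀ * M * Q * (Qᵀ * M⁻¹ * Q) = 1 :=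
  calc Qᵀ * M * Q * (Qᵀ * M⁻¹ * Q) = Qᵀ * (M * (Q * Qᵀ) * M⁻¹) * Q := by
        simp only [Matrix.mul_assoc]
    _ = 1 := by rw [hQ', Matrix.mul_one, mul_nonsing_inv M hM, Matrix.mul_one, hQ]

theorem dotProduct_transpose_mul_mul_mulVec [CommRing R] (N : Matrix κ κ R)
    (C : Matrix κ ι R) (x : ι → R) :
    x ⬝ᵥ ((Cᵀ * N * C) *ᵥ x) = (C *ᵥ x) ⬝ᵥ (N *ᵥ (C *ᵥ x)) := by
  rw [← mulVec_mulVec, ← mulVec_mulVec, dotProduct_mulVec, vecMul_transpose]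

noncomputable def posCount (d : ι → ℝ) : ℕ := #{i | 0 < d i}

theorem posCount_sumElim (a : ι → ℝ) (b : κ → ℝ) :
    posCount (Sum.elim a b) = posCount a + posCount b := by
  simp only [posCount, card_filter, Fintype.sum_sum_type, Sum.elim_inl, Sum.elim_inr]
  rfl

variable [Fintype μ] [Fintype ν] [DecidableEq ι] [DecidableEq κ] [DecidableEq μ] [DecidableEq ν]

section Congruence

variable [CommRing R]

def Congruent (M : Matrix ι ι R) (M' : Matrix κ κ R) : Prop :=
  ∃ (C : Matrix κ ι R) (C' : Matrix ι κ R), C * C' = 1 ∧ C' * C = 1 ∧ M = Cᵀ * M' * C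

theorem congruent_transpose_mul_mul (M' : Matrix κ κ R) {C : Matrix κ ι R} {C' : Matrix ι κ R}
    (h₁ : C * C' = 1) (h₂ : C' * C = 1) : Congruent (Cᵀ * M' * C) M' :=
  ⟨C, C', h₁, h₂, rfl⟩

namespace Congruent

variable {M : Matrix ι ι R} {M' : Matrix κ κ R} {M'' : Matrix μ μ R}

theorem symm (h : Congruent M M') : Congruent M' M := by
  obtain ⟨C, C', h₁, h₂, rfl⟩ := h
  refine ⟨C', C, h₂, h₁, ?_⟩
  calc M' = (C * C')ᵀ * M' * (C * C') := by
        rw [h₁, transpose_one, Matrix.one_mul, Matrix.mul_one]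
    _ = C'ᵀ * (Cᵀ * M' * C) * C' := by simp only [transpose_mul, Matrix.mul_assoc]

theorem trans (h : Congruent M M') (h' : Congruent M' M'') : Congruent M M'' := by
  obtain ⟨C, C', h₁, h₂, rfl⟩ := h
  obtain ⟨D, D', h₃, h₄, rfl⟩ := h'
  refine ⟨D * C, C' * D', ?_, ?_, by simp only [transpose_mul, Matrix.mul_assoc]⟩
  · rw [Matrix.mul_assoc, ← Matrix.mul_assoc C, h₁, Matrix.one_mul, h₃]
  · rw [Matrix.mul_assoc, ← Matrix.mul_assoc D', h₄, Matrix.one_mul, h₂]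

theorem fromBlocks_zero {D : Matrix μ μ R} {D' : Matrix ν ν R}
    (hM : Congruent M M') (hD : Congruent D D') :
    Congruent (fromBlocks M 0 0 D) (fromBlocks M' 0 0 D') := by
  obtain ⟨C, C', h₁, h₂, rfl⟩ := hM
  obtain ⟨E, E', h₃, h₄, rfl⟩ := hD
  refine ⟨fromBlocks C 0 0 E, fromBlocks C' 0 0 E', ?_, ?_, ?_⟩
  · simp [fromBlocks_multiply, h₁, h₃]
  · simp [fromBlocks_multiply, h₂, h₄]
  · simp [fromBlocks_transpose, fromBlocks_multiply]

end Congruent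

theorem congruent_fromBlocks_schur {A : Matrix ι ι R} (hA : A.IsSymm) (hA' : IsUnit A.det)
    (B : Matrix ι κ R) (D : Matrix κ κ R) :
    Congruent (fromBlocks A B Bᵀ D) (fromBlocks A 0 0 (D - Bᵀ * A⁻¹ * B)) := by
  let := A.invertibleOfIsUnitDet hA'
  refine ⟨fromBlocks 1 (A⁻¹ * B) 0 1, fromBlocks 1 (-(A⁻¹ * B)) 0 1, ?_, ?_, ?_⟩
  · simp [fromBlocks_multiply]
  · simp [fromBlocks_multiply]
  · have hAinv : A⁻¹ᵀ = A⁻¹ := by rw [transpose_nonsing_inv, hA.eq]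
    rw [fromBlocks_eq_of_invertible₁₁]
    simp [fromBlocks_transpose, invOf_eq_nonsing_inv, hAinv]

theorem schur_mul_eq_one_of_fromBlocks_mul_eq_one {A : Matrix ι ι R} (hA : IsUnit A.det)
    {B : Matrix ι κ R} {C : Matrix κ ι R} {D : Matrix κ κ R} {P₁₁ : Matrix ι ι R}
    {P₁₂ : Matrix ι κ R} {P₂₁ : Matrix κ ι R} {P₂₂ : Matrix κ κ R}
    (h : fromBlocks A B C D * fromBlocks P₁₁ P₁₂ P₂₁ P₂₂ = 1) :
    (D - C * A⁻¹ * B) * P₂₂ = 1 := by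
  rw [fromBlocks_multiply, ← fromBlocks_one, fromBlocks_inj] at h
  obtain ⟨-, h₁₂, -, h₂₂⟩ := h
  have hP₁₂ : P₁₂ = -(A⁻¹ * B * P₂₂) := by
    rw [eq_neg_iff_add_eq_zero, ← nonsing_inv_mul_cancel_left A P₁₂ hA, Matrix.mul_assoc,
      ← Matrix.mul_add, h₁₂, Matrix.mul_zero]
  rw [← h₂₂, hP₁₂]
  simp only [Matrix.sub_mul, Matrix.mul_neg, Matrix.mul_assoc]
  abel

theorem congruent_of_mul_eq_one {S T : Matrix ι ι R} (hS : S.IsSymm) (h : S * T = 1) :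
    Congruent T S := by
  obtain rfl : S⁻¹ = T := inv_eq_right_inv h
  refine ⟨S⁻¹, S, mul_eq_one_comm.mp h, h, ?_⟩
  rw [hS.inv.eq, Matrix.mul_assoc, h, Matrix.mul_one]

end Congruence

section Inertia

open Pi

theorem dotProduct_diagonal_mulVec (d x : ι → ℝ) :
    x ⬝ᵥ (diagonal d *ᵥ x) = ∑ i, d i * x i ^ 2 := by
  simp only [dotProduct, mulVec_diagonal]
  exact sum_congr rfl fun i _ => by ring

theorem dotProduct_diagonal_mulVec_pos {d x : ι → ℝ}
    (hx : x ∈ supported ℝ ↑({i | 0 < d i} : Finset ι)) (hx₀ : x ≠ 0) :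
    0 < x ⬝ᵥ (diagonal d *ᵥ x) := by
  rw [mem_supported] at hx
  obtain ⟨j, hj⟩ := Function.ne_iff.mp hx₀
  have hxj : x j ≠ 0 := hj
  have hdj : 0 < d j := by
    by_contra h
    exact hj (hx j (by simpa using h))
  rw [dotProduct_diagonal_mulVec]
  refine sum_pos' (fun i _ => ?_) ⟨j, mem_univ j, by positivity⟩
  by_cases hi : 0 < d i
  · positivity
  · simp [hx i (by simpa using hi)]

theorem dotProduct_diagonal_mulVec_nonpos {d x : ι → ℝ}
    (hx : x ∈ supported ℝ ↑(({i | 0 < d i} : Finset ι)ᶜ)) : x ⬝ᵥ (diagonal d *ᵥ x) ≤ 0 := by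
  rw [mem_supported] at hx
  rw [dotProduct_diagonal_mulVec]
  refine sum_nonpos fun i _ => ?_
  by_cases hi : 0 < d i
  · simp [hx i (by simpa using hi)]
  · exact mul_nonpos_of_nonpos_of_nonneg (not_lt.mp hi) (sq_nonneg _)

/-- Sylvester's law of inertia: `C` maps the vectors supported where `d > 0` injectively onto a
space on which the form of `diagonal e` is positive definite, so that space meets the vectors
supported where `e ≤ 0` trivially. -/
theorem posCount_le_of_congruent {d : ι → ℝ} {e : κ → ℝ}
    (h : Congruent (diagonal d) (diagonal e)) : posCount d ≤ posCount e := by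
  obtain ⟨C, C', -, hC, hde⟩ := h
  have hinj : Function.Injective (mulVecLin C) := fun x y hxy => by
    simpa [mulVec_mulVec, hC] using congrArg (C' *ᵥ ·) hxy
  set V := (supported ℝ ↑({i | 0 < d i} : Finset ι)).map (mulVecLin C)
  set W : Submodule ℝ (κ → ℝ) := supported ℝ ↑(({j | 0 < e j} : Finset κ)ᶜ)
  have hV : finrank ℝ V = posCount d := by
    rw [← (Submodule.equivMapOfInjective _ hinj _).finrank_eq, finrank_supported]
    rfl
  have hW : finrank ℝ W = Fintype.card κ - posCount e := by
    rw [finrank_supported, card_compl]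
    rfl
  have hVW : Disjoint V W := by
    rw [Submodule.disjoint_def]
    rintro _ ⟨x, hx, rfl⟩ hxW
    by_contra hne
    have hpos := dotProduct_diagonal_mulVec_pos hx (fun h => hne (by simp [h]))
    rw [hde, dotProduct_transpose_mul_mul_mulVec] at hpos
    exact (dotProduct_diagonal_mulVec_nonpos hxW).not_gt hpos
  have hdim := Submodule.finrank_add_finrank_le_of_disjoint hVW
  have hle : posCount e ≤ Fintype.card κ := card_le_univ _
  rw [hV, hW, finrank_fintype_fun_eq_card] at hdim
  omega

theorem IsHermitian.congruent_diagonal_eigenvalues {M : Matrix ι ι ℝ} (hM : M.IsHermitian) :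
    Congruent M (diagonal hM.eigenvalues) := by
  set U : Matrix ι ι ℝ := (hM.eigenvectorUnitary : Matrix ι ι ℝ)
  have hUU : Uᵀ * U = 1 := by
    simpa [U, star_eq_conjTranspose] using Unitary.coe_star_mul_self hM.eigenvectorUnitary
  have hUU' : U * Uᵀ = 1 := by
    simpa [U, star_eq_conjTranspose] using Unitary.coe_mul_star_self hM.eigenvectorUnitary
  refine ⟨Uᵀ, U, hUU, hUU', ?_⟩
  simpa [U, star_eq_conjTranspose] using hM.spectral_theorem

theorem Congruent.posCount_eq {d : ι → ℝ} {e : κ → ℝ} (h : Congruent (diagonal d) (diagonal e)) :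
    posCount d = posCount e :=
  le_antisymm (posCount_le_of_congruent h) (posCount_le_of_congruent h.symm)

theorem IsHermitian.posCount_eigenvalues_eq {M : Matrix ι ι ℝ} (hM : M.IsHermitian) {d : κ → ℝ}
    (h : Congruent M (diagonal d)) : posCount hM.eigenvalues = posCount d :=
  (hM.congruent_diagonal_eigenvalues.symm.trans h).posCount_eq

end Inertia

end Matrix

/-- Haynsworth inertia additivity: for a nonsingular symmetric `N×N` matrix `M` and a subspace
`S` (given as the column span of a matrix `X` with orthonormal columns, with `X'` an orthonormal
basis of `S⊥`), if the compression `M|_S ≅ Xᵀ M X` is nonsingular, then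
`n₊(M) = n₊(M|_S) + n₊((M⁻¹)|_{S⊥})`. -/
theorem haynsworth_inertia
    (N k l : ℕ) (hkl : k + l = N)
    (M : Matrix (Fin N) (Fin N) ℝ) (hM : M.IsHermitian) (hMinv : IsUnit M.det)
    (X : Matrix (Fin N) (Fin k) ℝ) (X' : Matrix (Fin N) (Fin l) ℝ)
    (hX : Xᵀ * X = 1) (hX' : X'ᵀ * X' = 1) (hperp : Xᵀ * X' = 0)
    (hS : (Xᵀ * M * X).IsHermitian) (hSinv : IsUnit (Xᵀ * M * X).det)
    (hSc : (X'ᵀ * M⁻¹ * X').IsHermitian) :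
    (Finset.univ.filter fun i => 0 < hM.eigenvalues i).card
      = (Finset.univ.filter fun i => 0 < hS.eigenvalues i).card
        + (Finset.univ.filter fun i => 0 < hSc.eigenvalues i).card := by
  set A := Xᵀ * M * X
  set B := Xᵀ * M * X'
  set Q := fromCols X X'
  have hQ : Qᵀ * Q = 1 := transpose_fromCols_mul_fromCols_eq_one hX hX' hperp
  have hQ' : Q * Qᵀ = 1 :=
    (mul_eq_one_comm_of_equiv (finSumFinEquiv.trans (finCongr hkl))).mp hQ
  have hblocks : Qᵀ * M * Q = fromBlocks A B Bᵀ (X'ᵀ * M * X') := by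
    rw [transpose_fromCols_mul_mul_fromCols]
    congr
    simp [B, (isHermitian_iff_isSymm.mp hM).eq, Matrix.mul_assoc]
  have hschur_inv : (X'ᵀ * M * X' - Bᵀ * A⁻¹ * B) * (X'ᵀ * M⁻¹ * X') = 1 := by
    refine schur_mul_eq_one_of_fromBlocks_mul_eq_one hSinv (P₁₁ := Xᵀ * M⁻¹ * X)
      (P₁₂ := Xᵀ * M⁻¹ * X') (P₂₁ := X'ᵀ * M⁻¹ * X) ?_
    rw [← hblocks, ← transpose_fromCols_mul_mul_fromCols]
    exact transpose_mul_mul_mul_transpose_mul_inv_mul hQ hQ' hMinv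
  have hschur : (X'ᵀ * M * X' - Bᵀ * A⁻¹ * B).IsHermitian := by
    rw [isHermitian_iff_isSymm, ← inv_eq_left_inv hschur_inv]
    exact (isHermitian_iff_isSymm.mp hSc).inv
  have hMdiag : M.Congruent (diagonal (Sum.elim hS.eigenvalues hschur.eigenvalues)) := by
    rw [← fromBlocks_diagonal]
    refine (congruent_transpose_mul_mul M hQ' hQ).symm.trans ?_
    rw [hblocks]
    exact (congruent_fromBlocks_schur (isHermitian_iff_isSymm.mp hS) hSinv B _).trans
      (hS.congruent_diagonal_eigenvalues.fromBlocks_zero hschur.congruent_diagonal_eigenvalues)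
  have hScdiag : (X'ᵀ * M⁻¹ * X').Congruent (diagonal hschur.eigenvalues) :=
    (congruent_of_mul_eq_one (isHermitian_iff_isSymm.mp hschur) hschur_inv).trans
      hschur.congruent_diagonal_eigenvalues
  change posCount hM.eigenvalues = posCount hS.eigenvalues + posCount hSc.eigenvalues
  rw [hM.posCount_eigenvalues_eq hMdiag, hSc.posCount_eigenvalues_eq hScdiag, posCount_sumElim]
end

section
/- Let H be an n×n real symmetric matrix with a one-dimensional nullspace spanned by x. Then for any vectors y, z ∈ ℝⁿ, det(H + y zᵀ) = (⟨x,y⟩⟨x,z⟩ / ⟨x,x⟩) · det_red(H), where det_red(H) is the product of the nonzero eigenvalues of H. -/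
/-!
Diagonalize `H = U D Uᵀ` with `U` orthogonal; conjugating by `U` gives
`det (H + y zᵀ) = det (D + a bᵀ)` with `a = Uᵀ y`, `b = Uᵀ z`. As the kernel of `H` is a line,
exactly one eigenvalue `dᵢ` vanishes, and then `D + a bᵀ` is the product of the identity with
its `i`-th column replaced by `a` and of `D` with its (zero) `i`-th row replaced by `bᵀ`, so its
determinant is `aᵢ bᵢ ∏_{j ≠ i} d_j`. Finally `aᵢ = ⟨uᵢ, y⟩` and `bᵢ = ⟨uᵢ, z⟩` for the unit
eigenvector `uᵢ`, which spans the kernel, whence `aᵢ bᵢ = ⟨x,y⟩⟨x,z⟩/⟨x,x⟩`.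
-/

open Matrix Finset

namespace Matrix

section CommRing

variable {ι R : Type*} [Fintype ι] [DecidableEq ι] [CommRing R]

theorem det_updateRow_diagonal (d v : ι → R) (i : ι) :
    ((diagonal d).updateRow i v).det = (∏ j ∈ univ.erase i, d j) * v i := by
  rw [← cramer_transpose_apply, diagonal_transpose, cramer_eq_adjugate_mulVec,
    adjugate_diagonal, mulVec_diagonal]

theorem det_one_updateCol (u : ι → R) (i : ι) :
    ((1 : Matrix ι ι R).updateCol i u).det = u i := by
  rw [← cramer_apply, cramer_one]
  rfl

theorem diagonal_add_vecMulVec_eq_updateCol_mul_updateRow (d u v : ι → R) {i : ι}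
    (hi : d i = 0) :
    diagonal d + vecMulVec u v =
      (1 : Matrix ι ι R).updateCol i u * (diagonal d).updateRow i v := by
  ext k l
  rw [mul_apply, ← add_sum_erase _ _ (mem_univ i)]
  simp only [updateCol_apply, updateRow_apply, if_true, Matrix.add_apply, vecMulVec_apply]
  rw [add_comm, sum_congr rfl fun m hm => by
    rw [if_neg (ne_of_mem_erase hm), if_neg (ne_of_mem_erase hm)]]
  simp only [one_apply, ite_mul, one_mul, zero_mul, sum_ite_eq, mem_erase, mem_univ, and_true]
  by_cases hk : k = i
  · subst hk
    simp [diagonal_apply, hi]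
  · simp [hk]

theorem det_diagonal_add_vecMulVec_of_eq_zero (d u v : ι → R) {i : ι} (hi : d i = 0) :
    (diagonal d + vecMulVec u v).det = u i * v i * ∏ j ∈ univ.erase i, d j := by
  rw [diagonal_add_vecMulVec_eq_updateCol_mul_updateRow d u v hi, det_mul, det_one_updateCol,
    det_updateRow_diagonal]
  ring

end CommRing

theorem dotProduct_mul_dotProduct_of_mem_span_singleton {ι K : Type*} [Fintype ι] [Field K]
    {v x : ι → K} (hv : v ∈ Submodule.span K {x}) (hvv : v ⬝ᵥ v = 1) (y z : ι → K) :
    (v ⬝ᵥ y) * (v ⬝ᵥ z) = (x ⬝ᵥ y) * (x ⬝ᵥ z) / (x ⬝ᵥ x) := by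
  obtain ⟨t, rfl⟩ := Submodule.mem_span_singleton.mp hv
  simp only [smul_dotProduct, dotProduct_smul, smul_eq_mul] at hvv ⊢
  have hxx : x ⬝ᵥ x ≠ 0 := by
    rintro h
    simp [h] at hvv
  field_simp
  linear_combination (x ⬝ᵥ y) * (x ⬝ᵥ z) * hvv

namespace IsHermitian

variable {ι 𝕜 : Type*} [Fintype ι] [DecidableEq ι] [RCLike 𝕜] {A : Matrix ι ι 𝕜}

theorem card_eigenvalues_eq_zero (hA : A.IsHermitian) :
    #{i | hA.eigenvalues i = 0} = Module.finrank 𝕜 (LinearMap.ker A.mulVecLin) := by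
  have h := A.mulVecLin.finrank_range_add_finrank_ker
  rw [← rank, hA.rank_eq_card_non_zero_eigs, Module.finrank_fintype_fun_eq_card,
    Fintype.card_subtype_compl, Fintype.card_subtype] at h
  have := card_le_univ {i | hA.eigenvalues i = 0}
  omega

theorem exists_filter_eigenvalues_ne_zero_eq_erase (hA : A.IsHermitian)
    (hker : Module.finrank 𝕜 (LinearMap.ker A.mulVecLin) = 1) :
    ∃ i, hA.eigenvalues i = 0 ∧ ({j | hA.eigenvalues j ≠ 0} : Finset ι) = univ.erase i := by
  obtain ⟨i, hzero⟩ := card_eq_one.mp (hA.card_eigenvalues_eq_zero.trans hker)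
  refine ⟨i, by simpa using hzero.ge (mem_singleton_self i), ?_⟩
  rw [filter_not, hzero, sdiff_singleton_eq_erase]

theorem det_add_vecMulVec_eq_det_diagonal_add_vecMulVec (hA : A.IsHermitian) (y z : ι → 𝕜) :
    (A + vecMulVec y z).det = (diagonal (RCLike.ofReal ∘ hA.eigenvalues) +
      vecMulVec (star (hA.eigenvectorUnitary : Matrix ι ι 𝕜) *ᵥ y)
        (z ᵥ* (hA.eigenvectorUnitary : Matrix ι ι 𝕜))).det := by
  rw [← det_conj_of_mul_eq_one (Unitary.coe_star_mul_self hA.eigenvectorUnitary)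
    (Unitary.coe_mul_star_self hA.eigenvectorUnitary), ← hA.conjStarAlgAut_star_eigenvectorUnitary]
  simp [Matrix.mul_add, Matrix.add_mul, mul_vecMulVec, vecMulVec_mul]

theorem star_eigenvectorUnitary_mulVec_apply (hA : A.IsHermitian) (y : ι → 𝕜) (i : ι) :
    (star (hA.eigenvectorUnitary : Matrix ι ι 𝕜) *ᵥ y) i = star ⇑(hA.eigenvectorBasis i) ⬝ᵥ y := by
  simp [mulVec, dotProduct]

theorem vecMul_eigenvectorUnitary_apply (hA : A.IsHermitian) (z : ι → 𝕜) (i : ι) :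
    (z ᵥ* (hA.eigenvectorUnitary : Matrix ι ι 𝕜)) i = z ⬝ᵥ ⇑(hA.eigenvectorBasis i) := by
  simp [vecMul, dotProduct]

end IsHermitian

end Matrix

/-- Rank-one update determinant: if `H` is symmetric with one-dimensional kernel spanned by
`x`, then `det(H + y zᵀ) = (⟨x,y⟩⟨x,z⟩/⟨x,x⟩) · det_red(H)`, where `det_red(H)` is the product
of the nonzero eigenvalues of `H`. -/
theorem det_rank_one_update
    (n : ℕ) (H : Matrix (Fin n) (Fin n) ℝ) (hH : H.IsHermitian)
    (x : Fin n → ℝ) (hx : x ≠ 0)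
    (hker : LinearMap.ker H.mulVecLin = Submodule.span ℝ {x})
    (y z : Fin n → ℝ) :
    (H + Matrix.vecMulVec y z).det
      = (x ⬝ᵥ y) * (x ⬝ᵥ z) / (x ⬝ᵥ x)
        * ∏ i ∈ Finset.univ.filter (fun i => hH.eigenvalues i ≠ 0), hH.eigenvalues i := by
  obtain ⟨i, hi, hnonzero⟩ :=
    hH.exists_filter_eigenvalues_ne_zero_eq_erase (by rw [hker, finrank_span_singleton hx])
  have hv : ⇑(hH.eigenvectorBasis i) ∈ Submodule.span ℝ {x} := by
    rw [← hker, LinearMap.mem_ker, mulVecLin_apply, hH.mulVec_eigenvectorBasis, hi, zero_smul]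
  have hvv : ⇑(hH.eigenvectorBasis i) ⬝ᵥ ⇑(hH.eigenvectorBasis i) = 1 := by
    have h := hH.eigenvectorBasis.inner_eq_one i
    rwa [EuclideanSpace.inner_eq_star_dotProduct, star_trivial] at h
  rw [hH.det_add_vecMulVec_eq_det_diagonal_add_vecMulVec,
    det_diagonal_add_vecMulVec_of_eq_zero _ _ _ (i := i) (by simp [hi]),
    hH.star_eigenvectorUnitary_mulVec_apply, hH.vecMul_eigenvectorUnitary_apply, star_trivial,
    dotProduct_comm z, dotProduct_mul_dotProduct_of_mem_span_singleton hv hvv, hnonzero]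
  rfl
end

section
/- Let R_N be the ring (cycle) graph on N ≥ 3 vertices with nonzero edge weights γ_1,…,γ_N, at most one of which is negative. The Laplacian L = -B D Bᵀ has no positive eigenvalues if and only if ∑_{i=1}^N 1/γ_i ≤ 0 or all γ_i > 0. In particular, if γ_1 < 0 and γ_i > 0 for i ≥ 2, then L is negative semidefinite if and only if γ_1 ≥ -1/(∑_{i=2}^N 1/γ_i), i.e., iff ∑_{i=1}^N 1/γ_i ≤ 0. -/
open Matrix BigOperators

-- telescoping: realize any zero-sum d as a cyclic difference
lemma aux_telescope (N : ℕ) [NeZero N] (hN : 3 ≤ N) (d : Fin N → ℝ)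
    (hd : ∑ i, d i = 0) : ∃ x : Fin N → ℝ, ∀ e, x e - x (e + 1) = d e := by
  refine ⟨fun j => -∑ e ∈ Finset.univ.filter (fun e : Fin N => (e : ℕ) < (j : ℕ)), d e, ?_⟩
  intro e
  have hval1 : ((1 : Fin N) : ℕ) = 1 := by
    rw [Fin.val_one', Nat.mod_eq_of_lt (by omega)]
  dsimp only
  rcases Nat.lt_or_ge ((e : ℕ) + 1) N with h | h
  · -- e.val + 1 < N
    have hv : ((e + 1 : Fin N) : ℕ) = (e : ℕ) + 1 := by
      rw [Fin.val_add, hval1, Nat.mod_eq_of_lt h]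
    have hset : Finset.univ.filter (fun v : Fin N => (v : ℕ) < (e : ℕ) + 1)
        = insert e (Finset.univ.filter (fun v : Fin N => (v : ℕ) < (e : ℕ))) := by
      ext v
      simp only [Finset.mem_filter, Finset.mem_univ, true_and, Finset.mem_insert,
        Nat.lt_succ_iff_lt_or_eq]
      constructor
      · rintro (h1 | h1)
        · exact Or.inr h1
        · exact Or.inl (Fin.ext h1)
      · rintro (rfl | h1)
        · exact Or.inr rfl
        · exact Or.inl h1
    rw [hv, hset, Finset.sum_insert (by simp)]
    ring
  · -- e.val + 1 = N, so (e+1) wraps to 0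
    have hm : ((e : ℕ) + 1) % N = 0 := by
      have h' : (e : ℕ) + 1 = N := by omega
      rw [h', Nat.mod_self]
    have h0 : Finset.univ.filter (fun v : Fin N => (v : ℕ) < ((e : ℕ) + 1) % N) = ∅ := by
      rw [hm]; simp
    have h1 : Finset.univ.filter (fun v : Fin N => (v : ℕ) < (e : ℕ)) = Finset.univ.erase e := by
      ext v
      simp only [Finset.mem_filter, Finset.mem_univ, true_and, Finset.mem_erase, and_true]
      constructor
      · intro hv' h2; subst h2; exact lt_irrefl _ hv'
      · intro hne
        have := v.isLt
        have : (v : ℕ) ≠ (e : ℕ) := fun hc => hne (Fin.ext hc)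
        omega
    rw [Fin.val_add, hval1, h0, h1, Finset.sum_empty]
    have := Finset.add_sum_erase _ d (Finset.mem_univ e)
    rw [hd] at this
    linarith

-- (Bᵀ *ᵥ x) e = x e - x (e + 1)
lemma aux_BT (N : ℕ) [NeZero N] (hN : 3 ≤ N) (B : Matrix (Fin N) (Fin N) ℝ)
    (hB : ∀ v e, B v e = if v = e then 1 else if v = e + 1 then -1 else 0)
    (x : Fin N → ℝ) (e : Fin N) : (Bᵀ *ᵥ x) e = x e - x (e + 1) := by
  have hne : e ≠ e + 1 := by
    intro hc
    have : (1 : Fin N) = 0 := by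
      have := hc.symm
      rwa [add_eq_left] at this
    have h1 : ((1 : Fin N) : ℕ) = 1 := by rw [Fin.val_one', Nat.mod_eq_of_lt (by omega)]
    rw [this] at h1
    simp at h1
  have key : ∀ v, Bᵀ e v * x v
      = (if v = e then x e else 0) + (if v = e + 1 then -x (e + 1) else 0) := by
    intro v
    rw [Matrix.transpose_apply, hB]
    split_ifs with h1 h2 h2
    · exact absurd (h1.symm.trans h2) hne
    · rw [h1]; ring
    · rw [h2]; ring
    · simp
  rw [Matrix.mulVec, dotProduct]
  simp_rw [key]
  rw [Finset.sum_add_distrib, Finset.sum_ite_eq' Finset.univ e fun _ => x e,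
    Finset.sum_ite_eq' Finset.univ (e + 1) fun _ => -x (e + 1)]
  simp
  ring

-- quadratic form
lemma aux_quad (N : ℕ) [NeZero N] (hN : 3 ≤ N) (γ : Fin N → ℝ)
    (B : Matrix (Fin N) (Fin N) ℝ)
    (hB : ∀ v e, B v e = if v = e then 1 else if v = e + 1 then -1 else 0)
    (x : Fin N → ℝ) :
    x ⬝ᵥ ((B * Matrix.diagonal γ * Bᵀ) *ᵥ x) = ∑ e, γ e * (x e - x (e + 1)) ^ 2 := by
  rw [← Matrix.mulVec_mulVec, ← Matrix.mulVec_mulVec, Matrix.dotProduct_mulVec,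
    ← Matrix.mulVec_transpose]
  rw [dotProduct]
  refine Finset.sum_congr rfl fun e _ => ?_
  rw [Matrix.mulVec_diagonal, aux_BT N hN B hB x e]
  ring

-- from "at most one negative" and one non-positive entry, extract the structure
lemma aux_onek (N : ℕ) (γ : Fin N → ℝ) (hγ : ∀ i, γ i ≠ 0)
    (hone : (Finset.univ.filter fun i => γ i < 0).card ≤ 1)
    (k : Fin N) (hk : γ k < 0) : ∀ i, i ≠ k → 0 < γ i := by
  intro i hik
  rcases lt_or_gt_of_ne (hγ i) with h | h
  · exfalso
    have hsub : ({i, k} : Finset (Fin N)) ⊆ Finset.univ.filter fun j => γ j < 0 := by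
      intro j hj
      simp only [Finset.mem_insert, Finset.mem_singleton] at hj
      rcases hj with rfl | rfl <;> simp [h, hk]
    have := Finset.card_le_card hsub
    rw [Finset.card_pair hik] at this
    omega
  · exact h

lemma aux_main (N : ℕ) [NeZero N] (hN : 3 ≤ N) (γ : Fin N → ℝ) (hγ : ∀ i, γ i ≠ 0)
    (hone : (Finset.univ.filter fun i => γ i < 0).card ≤ 1)
    (B : Matrix (Fin N) (Fin N) ℝ)
    (hB : ∀ v e, B v e = if v = e then 1 else if v = e + 1 then -1 else 0)
    (hSym : (B * Matrix.diagonal γ * Bᵀ).IsHermitian) :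
    (B * Matrix.diagonal γ * Bᵀ).PosSemidef ↔ (∑ i, (γ i)⁻¹ ≤ 0 ∨ ∀ i, 0 < γ i) := by
  constructor
  · -- psd → disjunction; contrapose
    intro hpsd
    by_contra hcon
    push_neg at hcon
    obtain ⟨hsum, k, hk0⟩ := hcon
    have hk : γ k < 0 := lt_of_le_of_ne hk0 (hγ k)
    have hpos := aux_onek N γ hγ hone k hk
    set s := Finset.univ.erase k with hs
    set S := ∑ i ∈ s, (γ i)⁻¹ with hSdef
    have hS : 0 < S := by
      apply Finset.sum_pos
      · intro i hi
        exact inv_pos.mpr (hpos i (Finset.ne_of_mem_erase hi))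
      · have : 1 < Finset.univ.card (α := Fin N) := by simp; omega
        rw [← Finset.card_pos, Finset.card_erase_of_mem (Finset.mem_univ k)]
        simp only [Finset.card_univ, Fintype.card_fin]
        omega
    have hsplit : ∑ i, (γ i)⁻¹ = (γ k)⁻¹ + S :=
      (Finset.add_sum_erase _ _ (Finset.mem_univ k)).symm
    -- witness vector
    set d : Fin N → ℝ := fun i => if i = k then S else -(γ i)⁻¹ with hddef
    have hdsum : ∑ i, d i = 0 := by
      rw [← Finset.add_sum_erase _ d (Finset.mem_univ k)]
      have h1 : d k = S := by simp [hddef]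
      have h2 : ∑ i ∈ s, d i = -S := by
        rw [hSdef, ← Finset.sum_neg_distrib]
        refine Finset.sum_congr rfl fun i hi => ?_
        simp [hddef, Finset.ne_of_mem_erase hi]
      rw [h1, h2]; ring
    obtain ⟨x, hx⟩ := aux_telescope N hN d hdsum
    have hQ : x ⬝ᵥ ((B * Matrix.diagonal γ * Bᵀ) *ᵥ x) = γ k * S ^ 2 + S := by
      rw [aux_quad N hN γ B hB x]
      simp_rw [hx]
      rw [← Finset.add_sum_erase _ (fun e => γ e * d e ^ 2) (Finset.mem_univ k)]
      have h1 : γ k * d k ^ 2 = γ k * S ^ 2 := by simp [hddef]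
      have h2 : ∑ i ∈ s, γ i * d i ^ 2 = S := by
        rw [hSdef]
        refine Finset.sum_congr rfl fun i hi => ?_
        have : d i = -(γ i)⁻¹ := by simp [hddef, Finset.ne_of_mem_erase hi]
        rw [this]
        field_simp [hγ i]
      rw [h1, h2]
    have hneg : γ k * S ^ 2 + S < 0 := by
      have h1 : 1 < -(γ k * S) := by
        have h2 : -S < (γ k)⁻¹ := by linarith [hsplit ▸ hsum]
        have h3 := mul_lt_mul_of_neg_left h2 hk
        rw [mul_inv_cancel₀ (hγ k), mul_neg] at h3
        exact h3
      nlinarith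
    have := hpsd.dotProduct_mulVec_nonneg x
    rw [star_trivial, hQ] at this
    linarith
  · -- disjunction → psd
    intro hdisj
    refine .of_dotProduct_mulVec_nonneg hSym fun x => ?_
    rw [star_trivial, aux_quad N hN γ B hB x]
    set d : Fin N → ℝ := fun e => x e - x (e + 1) with hddef
    by_cases hall : ∀ i, 0 < γ i
    · exact Finset.sum_nonneg fun i _ => mul_nonneg (hall i).le (sq_nonneg _)
    · have hsum : ∑ i, (γ i)⁻¹ ≤ 0 := hdisj.resolve_right hall
      push_neg at hall
      obtain ⟨k, hk0⟩ := hall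
      have hk : γ k < 0 := lt_of_le_of_ne hk0 (hγ k)
      have hpos := aux_onek N γ hγ hone k hk
      set s := Finset.univ.erase k with hs
      set S := ∑ i ∈ s, (γ i)⁻¹ with hSdef
      have hS : 0 < S := by
        apply Finset.sum_pos
        · intro i hi
          exact inv_pos.mpr (hpos i (Finset.ne_of_mem_erase hi))
        · rw [← Finset.card_pos, Finset.card_erase_of_mem (Finset.mem_univ k)]
          simp only [Finset.card_univ, Fintype.card_fin]
          omega
      have hsplit : ∑ i, (γ i)⁻¹ = (γ k)⁻¹ + S :=
        (Finset.add_sum_erase _ _ (Finset.mem_univ k)).symm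
      -- d sums to zero
      have hdsum : ∑ i, d i = 0 := by
        rw [hddef, Finset.sum_sub_distrib]
        have : ∑ e, x (e + 1) = ∑ e, x e := Equiv.sum_comp (Equiv.addRight (1 : Fin N)) x
        rw [this, sub_self]
      have hds : ∑ i ∈ s, d i = -d k := by
        have := Finset.add_sum_erase _ d (Finset.mem_univ k)
        rw [hdsum] at this
        linarith
      -- Cauchy-Schwarz
      set T := ∑ i ∈ s, γ i * d i ^ 2 with hTdef
      have hT : 0 ≤ T :=
        Finset.sum_nonneg fun i hi =>
          mul_nonneg (hpos i (Finset.ne_of_mem_erase hi)).le (sq_nonneg _)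
      have hCS : d k ^ 2 ≤ S * T := by
        have := Finset.sum_sq_le_sum_mul_sum_of_sq_eq_mul s
          (r := d) (f := fun i => (γ i)⁻¹) (g := fun i => γ i * d i ^ 2)
          (fun i hi => (inv_pos.mpr (hpos i (Finset.ne_of_mem_erase hi))).le)
          (fun i hi => mul_nonneg (hpos i (Finset.ne_of_mem_erase hi)).le (sq_nonneg _))
          (fun i hi => by
            field_simp [hγ i])
        rw [hds] at this
        simpa using this
      have h1 : 0 ≤ 1 + γ k * S := by
        have h2 : (γ k)⁻¹ ≤ -S := by linarith [hsplit ▸ hsum]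
        have h3 := mul_le_mul_of_nonpos_left h2 hk.le
        rw [mul_inv_cancel₀ (hγ k)] at h3
        linarith
      rw [← Finset.add_sum_erase _ (fun i => γ i * d i ^ 2) (Finset.mem_univ k)]
      have hm : γ k * (S * T) ≤ γ k * d k ^ 2 := mul_le_mul_of_nonpos_left hCS hk.le
      nlinarith [mul_nonneg hT h1]

/-- Ring graph stability criterion: for the cycle graph `R_N` (`N ≥ 3`) with nonzero edge
weights `γ_i` (edge `i` joining vertices `i` and `i+1 mod N`), at most one of which is
negative, the Laplacian `L = -B D Bᵀ` has no positive eigenvalue iff `∑ 1/γ_i ≤ 0` or all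
`γ_i > 0`.  In particular, if `γ_0 < 0` and all other weights are positive, `L` is negative
semidefinite iff `∑ 1/γ_i ≤ 0`. -/
theorem ring_stability
    (N : ℕ) [NeZero N] (hN : 3 ≤ N) (γ : Fin N → ℝ) (hγ : ∀ i, γ i ≠ 0)
    (hone : (Finset.univ.filter fun i => γ i < 0).card ≤ 1)
    (B : Matrix (Fin N) (Fin N) ℝ)
    (hB : ∀ v e, B v e = if v = e then 1 else if v = e + 1 then -1 else 0)
    (L : Matrix (Fin N) (Fin N) ℝ)
    (hLdef : L = -(B * Matrix.diagonal γ * Bᵀ))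
    (hL : L.IsHermitian) :
    ((Finset.univ.filter fun i => 0 < hL.eigenvalues i).card = 0
        ↔ (∑ i, (γ i)⁻¹ ≤ 0 ∨ ∀ i, 0 < γ i))
    ∧ ((γ 0 < 0 ∧ ∀ i, i ≠ 0 → 0 < γ i) →
        ((-L).PosSemidef ↔ ∑ i, (γ i)⁻¹ ≤ 0)) := by
  have hML : -L = B * Matrix.diagonal γ * Bᵀ := by rw [hLdef, neg_neg]
  have hSym : (B * Matrix.diagonal γ * Bᵀ).IsHermitian := hML ▸ hL.neg
  have hmain := aux_main N hN γ hγ hone B hB hSym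
  -- bridge: (-L).PosSemidef ↔ all eigenvalues of L are ≤ 0
  have hbridge : (-L).PosSemidef ↔ ∀ i, hL.eigenvalues i ≤ 0 := by
    constructor
    · intro hpsd i
      have he := hL.eigenvalues_eq i
      simp only [RCLike.re_to_real] at he
      rw [star_trivial] at he
      set v : Fin N → ℝ := (WithLp.equiv 2 (Fin N → ℝ)) (hL.eigenvectorBasis i) with hv
      have h2 := hpsd.dotProduct_mulVec_nonneg v
      rw [Matrix.neg_mulVec, dotProduct_neg, star_trivial] at h2
      linarith [he ▸ h2]
    · intro hle
      rw [hL.spectral_theorem, Unitary.conjStarAlgAut_apply, show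
          -((hL.eigenvectorUnitary : Matrix (Fin N) (Fin N) ℝ)
              * Matrix.diagonal (RCLike.ofReal ∘ hL.eigenvalues)
              * star (hL.eigenvectorUnitary : Matrix (Fin N) (Fin N) ℝ))
          = (hL.eigenvectorUnitary : Matrix (Fin N) (Fin N) ℝ)
              * (-(Matrix.diagonal (RCLike.ofReal ∘ hL.eigenvalues)))
              * star (hL.eigenvectorUnitary : Matrix (Fin N) (Fin N) ℝ) by
        noncomm_ring]
      rw [Matrix.diagonal_neg, Matrix.star_eq_conjTranspose]
      refine (Matrix.posSemidef_diagonal_iff.mpr fun i => ?_).mul_mul_conjTranspose_same _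
      simpa using hle i
  constructor
  · rw [Finset.card_eq_zero, Finset.filter_eq_empty_iff, ← hmain, ← hML]
    constructor
    · intro h
      exact hbridge.mpr fun i => not_lt.1 (h (Finset.mem_univ i))
    · intro h i _
      exact not_lt.2 (hbridge.mp h i)
  · rintro ⟨h0, hpos⟩
    rw [hML, hmain]
    constructor
    · rintro (h | h)
      · exact h
      · exact absurd (h 0) (not_lt.2 h0.le)
    · exact Or.inl
end

section
/- Let G be a connected weighted graph with nonzero weights, and decompose a cycle-space basis so that Z_G has block form [[A_M, B_{M,+}, B_{M,-}],[B_{M,+}ᵀ, Z_{G+}, 0],[B_{M,-}ᵀ, 0, Z_{G-}]], where Z_{G+} (resp. Z_{G-}) is the cycle intersection form of the subgraph of positively (resp. negatively) weighted edges. Then Z_{G+} is negative definite and Z_{G-} is positive definite; consequently n_+(Z_G) ≥ dim of the cycle space of G_- and n_+(Z_G) ≤ C - dim of the cycle space of G_+. -/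
open Matrix

/-!
With `v = Y x` the cycle with coordinates `x`, the cycle form is `xᵀ Z x = -∑ₑ vₑ² / γₑ`.
A cycle of `G₊` vanishes on the negatively weighted edges, so the form is negative definite on
the span of the `Jp`-columns of `Y`; dually it is positive definite for `G₋`. A positive
(negative) definite principal block has at most as many rows as `Z` has positive (negative)
eigenvalues: otherwise some nonzero vector supported on the block has zero coordinates, in an
orthonormal eigenbasis of `Z`, along every positive (negative) eigenvalue, so its form would be
`≤ 0` (`≥ 0`).
-/

theorem card_le_card_of_forall_exists_mulVec_ne_zero {R m k : Type*} [Field R] [Fintype m]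
    [Fintype k] (M : Matrix m k R) (s : Finset m)
    (hM : ∀ y ≠ 0, ∃ i ∈ s, (M *ᵥ y) i ≠ 0) :
    Fintype.card k ≤ s.card := by
  let f : (k → R) →ₗ[R] (s → R) := LinearMap.funLeft R R Subtype.val ∘ₗ M.mulVecLin
  have hf : Function.Injective f := by
    rw [← LinearMap.ker_eq_bot, LinearMap.ker_eq_bot']
    intro y hy
    by_contra hy0
    obtain ⟨i, hi, hne⟩ := hM y hy0
    exact hne (congrFun hy ⟨i, hi⟩)
  simpa using LinearMap.finrank_le_finrank_of_injective hf

theorem submatrix_eq_transpose_mul_mul {R n k : Type*} [CommRing R] [Fintype n] [DecidableEq n]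
    (A : Matrix n n R) (f : k → n) :
    A.submatrix f f
      = ((1 : Matrix n n R).submatrix id f)ᵀ * A * (1 : Matrix n n R).submatrix id f := by
  ext i j
  simp [mul_apply, one_apply]

theorem submatrix_transpose_mul_diagonal_mul {R m n k : Type*} [CommRing R] [Fintype m]
    [DecidableEq m] [Fintype n] (Y : Matrix m n R) (d : m → R) (f : k → n) :
    (Yᵀ * diagonal d * Y).submatrix f f
      = (Y.submatrix id f)ᵀ * diagonal d * Y.submatrix id f := by
  rw [submatrix_mul _ _ _ id _ Function.bijective_id,
    submatrix_mul _ _ _ id _ Function.bijective_id, submatrix_id_id, transpose_submatrix]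

theorem posDef_transpose_mul_diagonal_mul {m k : Type*} [Fintype m] [DecidableEq m] [Fintype k]
    (X : Matrix m k ℝ) (hX : LinearIndependent ℝ Xᵀ) (d : m → ℝ)
    (hXd : ∀ e, d e ≤ 0 → ∀ j, X e j = 0) :
    (Xᵀ * diagonal d * X).PosDef := by
  rw [posDef_iff_dotProduct_mulVec]
  refine ⟨by simpa using isHermitian_conjTranspose_mul_mul X (isHermitian_diagonal d),
    fun y hy => ?_⟩
  set v := X *ᵥ y with hv
  have hv_zero : ∀ e, d e ≤ 0 → v e = 0 := fun e he => by
    simp [hv, mulVec, dotProduct, hXd e he]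
  obtain ⟨e, he⟩ : ∃ e, v e ≠ 0 :=
    Function.ne_iff.mp fun h => hy (mulVec_injective_iff.mpr hX (h.trans (mulVec_zero X).symm))
  have hde : 0 < d e := lt_of_not_ge fun h => he (hv_zero e h)
  calc 0 < ∑ e, d e * v e ^ 2 := by
        refine Finset.sum_pos' (fun e _ => ?_) ⟨e, Finset.mem_univ e, by positivity⟩
        rcases le_or_gt (d e) 0 with h | h
        · simp [hv_zero e h]
        · positivity
    _ = star y ⬝ᵥ (Xᵀ * diagonal d * X) *ᵥ y := by
        rw [star_trivial, ← mulVec_mulVec, ← mulVec_mulVec, dotProduct_mulVec, vecMul_transpose]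
        simp [hv, dotProduct, mulVec_diagonal, sq, mul_left_comm]

theorem posDef_submatrix_transpose_mul_diagonal_mul {m k l : Type*} [Fintype m] [DecidableEq m]
    [Fintype k] [Fintype l] (Y : Matrix m k ℝ) (hY : LinearIndependent ℝ Yᵀ) (d : m → ℝ)
    {f : l → k} (hf : Function.Injective f) (hYd : ∀ e, d e ≤ 0 → ∀ j, Y e (f j) = 0) :
    ((Yᵀ * diagonal d * Y).submatrix f f).PosDef := by
  rw [submatrix_transpose_mul_diagonal_mul]
  exact posDef_transpose_mul_diagonal_mul _ (hY.comp f hf) d hYd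

theorem finrank_span_finset_comp_eq_card {R M ι : Type*} [Field R] [AddCommGroup M]
    [Module R M] {v : ι → M} (hv : LinearIndependent R v) (J : Finset ι) :
    Module.finrank R (Submodule.span R (Set.range fun j : J => v j)) = J.card :=
  (finrank_span_eq_card (hv.comp _ Subtype.val_injective)).trans (Fintype.card_coe J)

theorem card_filter_pos_add_card_filter_neg_le {ι : Type*} [Fintype ι] (f : ι → ℝ) :
    (Finset.univ.filter fun i => 0 < f i).card + (Finset.univ.filter fun i => f i < 0).card
      ≤ Fintype.card ι := by
  classical
  rw [← Finset.card_union_of_disjoint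
    (Finset.disjoint_filter.mpr fun i _ hpos hneg => hpos.not_gt hneg)]
  exact Finset.card_le_univ _

namespace Matrix.IsHermitian

variable {n : Type*} [Fintype n] [DecidableEq n] {A : Matrix n n ℝ}

theorem dotProduct_mulVec_eq_sum (hA : A.IsHermitian) (x : n → ℝ) :
    x ⬝ᵥ A *ᵥ x
      = ∑ i, hA.eigenvalues i * ((hA.eigenvectorUnitary : Matrix n n ℝ)ᵀ *ᵥ x) i ^ 2 := by
  conv_lhs => rw [hA.spectral_theorem]
  rw [Unitary.conjStarAlgAut_apply, ← mulVec_mulVec, ← mulVec_mulVec, dotProduct_mulVec,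
    ← mulVec_transpose]
  simp [dotProduct, mulVec_diagonal, sq, mul_left_comm, star_eq_conjTranspose]

theorem dotProduct_submatrix_mulVec_eq_sum (hA : A.IsHermitian) {k : Type*} [Fintype k]
    (f : k → n) (y : k → ℝ) :
    y ⬝ᵥ A.submatrix f f *ᵥ y = ∑ i, hA.eigenvalues i *
      (((hA.eigenvectorUnitary : Matrix n n ℝ)ᵀ * (1 : Matrix n n ℝ).submatrix id f) *ᵥ y) i
        ^ 2 := by
  rw [submatrix_eq_transpose_mul_mul, ← mulVec_mulVec, ← mulVec_mulVec, dotProduct_mulVec,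
    vecMul_transpose, hA.dotProduct_mulVec_eq_sum, ← mulVec_mulVec]

theorem card_le_card_eigenvalues_pos {k : Type*} [Fintype k] (hA : A.IsHermitian) (f : k → n)
    (hf : (A.submatrix f f).PosDef) :
    Fintype.card k ≤ (Finset.univ.filter fun i => 0 < hA.eigenvalues i).card := by
  refine card_le_card_of_forall_exists_mulVec_ne_zero
    ((hA.eigenvectorUnitary : Matrix n n ℝ)ᵀ * (1 : Matrix n n ℝ).submatrix id f) _
    fun y hy => ?_
  have hpos := hf.dotProduct_mulVec_pos hy
  rw [star_trivial, hA.dotProduct_submatrix_mulVec_eq_sum] at hpos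
  obtain ⟨i, -, hi⟩ := Finset.exists_lt_of_sum_lt
    (lt_of_eq_of_lt Finset.sum_const_zero hpos)
  exact ⟨i, Finset.mem_filter.mpr ⟨Finset.mem_univ i, pos_of_mul_pos_left hi (sq_nonneg _)⟩,
    fun h => by simp [h] at hi⟩

theorem card_le_card_eigenvalues_neg {k : Type*} [Fintype k] (hA : A.IsHermitian) (f : k → n)
    (hf : (-A.submatrix f f).PosDef) :
    Fintype.card k ≤ (Finset.univ.filter fun i => hA.eigenvalues i < 0).card := by
  refine card_le_card_of_forall_exists_mulVec_ne_zero
    ((hA.eigenvectorUnitary : Matrix n n ℝ)ᵀ * (1 : Matrix n n ℝ).submatrix id f) _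
    fun y hy => ?_
  have hneg := hf.dotProduct_mulVec_pos hy
  rw [star_trivial, neg_mulVec, dotProduct_neg, neg_pos,
    hA.dotProduct_submatrix_mulVec_eq_sum] at hneg
  obtain ⟨i, -, hi⟩ := Finset.exists_lt_of_sum_lt
    (hneg.trans_eq Finset.sum_const_zero.symm)
  exact ⟨i, Finset.mem_filter.mpr ⟨Finset.mem_univ i, neg_of_mul_neg_left hi (sq_nonneg _)⟩,
    fun h => by simp [h] at hi⟩

end Matrix.IsHermitian

theorem cycle_form_blocks_general
    (n m : ℕ) (γ : Fin m → ℝ)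
    (hγ : ∀ e, γ e ≠ 0)
    (B : Matrix (Fin n) (Fin m) ℝ)
    (Y : Matrix (Fin m) (Fin (m + 1 - n)) ℝ)
    (hYindep : LinearIndependent ℝ (fun j => Yᵀ j))
    (Z : Matrix (Fin (m + 1 - n)) (Fin (m + 1 - n)) ℝ)
    (hZdef : Z = -(Yᵀ * Matrix.diagonal (fun e => (γ e)⁻¹) * Y))
    (hZ : Z.IsHermitian)
    (Splus Sminus : Submodule ℝ (Fin m → ℝ))
    (hSp : ∀ x, x ∈ Splus ↔ (B.mulVec x = 0 ∧ ∀ e, γ e < 0 → x e = 0))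
    (hSm : ∀ x, x ∈ Sminus ↔ (B.mulVec x = 0 ∧ ∀ e, 0 < γ e → x e = 0))
    (Jp Jm : Finset (Fin (m + 1 - n)))
    (hJp : Submodule.span ℝ (Set.range fun j : ↥Jp => Yᵀ (j : Fin (m + 1 - n))) = Splus)
    (hJm : Submodule.span ℝ (Set.range fun j : ↥Jm => Yᵀ (j : Fin (m + 1 - n))) = Sminus) :
    (-(Z.submatrix (fun j : ↥Jp => (j : Fin (m + 1 - n)))
        (fun j : ↥Jp => (j : Fin (m + 1 - n))))).PosDef
    ∧ (Z.submatrix (fun j : ↥Jm => (j : Fin (m + 1 - n)))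
        (fun j : ↥Jm => (j : Fin (m + 1 - n)))).PosDef
    ∧ Module.finrank ℝ Sminus ≤ (Finset.univ.filter fun i => 0 < hZ.eigenvalues i).card
    ∧ (Finset.univ.filter fun i => 0 < hZ.eigenvalues i).card + Module.finrank ℝ Splus
        ≤ m + 1 - n := by
  have hZp : (-(Z.submatrix (fun j : ↥Jp => (j : Fin (m + 1 - n)))
      (fun j : ↥Jp => (j : Fin (m + 1 - n))))).PosDef := by
    simp only [hZdef, submatrix_neg, Pi.neg_apply, neg_neg]
    refine posDef_submatrix_transpose_mul_diagonal_mul Y hYindep _ Subtype.val_injective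
      fun e he j => ((hSp _).mp (hJp.le (Submodule.subset_span (Set.mem_range_self j)))).2 e ?_
    exact lt_of_le_of_ne (inv_nonpos.mp he) (hγ e)
  have hZm : (Z.submatrix (fun j : ↥Jm => (j : Fin (m + 1 - n)))
      (fun j : ↥Jm => (j : Fin (m + 1 - n)))).PosDef := by
    rw [hZdef, ← Matrix.neg_mul, ← Matrix.mul_neg, diagonal_neg]
    refine posDef_submatrix_transpose_mul_diagonal_mul Y hYindep _ Subtype.val_injective
      fun e he j => ((hSm _).mp (hJm.le (Submodule.subset_span (Set.mem_range_self j)))).2 e ?_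
    exact lt_of_le_of_ne (inv_nonneg.mp (neg_nonpos.mp he)) (hγ e).symm
  refine ⟨hZp, hZm, ?_, ?_⟩
  · rw [← hJm, finrank_span_finset_comp_eq_card hYindep]
    simpa using hZ.card_le_card_eigenvalues_pos _ hZm
  · rw [← hJp, finrank_span_finset_comp_eq_card hYindep]
    have card_Jp_le := hZ.card_le_card_eigenvalues_neg _ hZp
    have card_eigenvalues_le := card_filter_pos_add_card_filter_neg_le hZ.eigenvalues
    rw [Fintype.card_coe] at card_Jp_le
    rw [Fintype.card_fin] at card_eigenvalues_le
    omega

/-- Block structure of the cycle form: choose a basis `Y` of the cycle space whose columns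
indexed by `Jp` (resp. `Jm`) form a basis of the cycle space `S₊` of the positively-weighted
subgraph (resp. `S₋` of the negatively-weighted subgraph).  Then the corresponding diagonal
block `Z_{G₊}` of `Z_G` is negative definite and `Z_{G₋}` is positive definite; consequently
`dim S₋ ≤ n₊(Z_G) ≤ C - dim S₊`. -/
theorem cycle_form_blocks
    (n m : ℕ) (tail head : Fin m → Fin n) (γ : Fin m → ℝ)
    (hγ : ∀ e, γ e ≠ 0)
    (hloop : ∀ e, tail e ≠ head e)
    (hsimple : ∀ e f : Fin m,
      ({tail e, head e} : Finset (Fin n)) = {tail f, head f} → e = f)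
    (hconn : (SimpleGraph.fromRel (fun v w => ∃ e, tail e = v ∧ head e = w)).Connected)
    (B : Matrix (Fin n) (Fin m) ℝ)
    (hB : ∀ v e, B v e = if v = tail e then 1 else if v = head e then -1 else 0)
    (Y : Matrix (Fin m) (Fin (m + 1 - n)) ℝ)
    (hYindep : LinearIndependent ℝ (fun j => Yᵀ j))
    (hYspan : Submodule.span ℝ (Set.range fun j => Yᵀ j) = LinearMap.ker B.mulVecLin)
    (Z : Matrix (Fin (m + 1 - n)) (Fin (m + 1 - n)) ℝ)
    (hZdef : Z = -(Yᵀ * Matrix.diagonal (fun e => (γ e)⁻¹) * Y))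
    (hZ : Z.IsHermitian)
    (Splus Sminus : Submodule ℝ (Fin m → ℝ))
    (hSp : ∀ x, x ∈ Splus ↔ (B.mulVec x = 0 ∧ ∀ e, γ e < 0 → x e = 0))
    (hSm : ∀ x, x ∈ Sminus ↔ (B.mulVec x = 0 ∧ ∀ e, 0 < γ e → x e = 0))
    (Jp Jm : Finset (Fin (m + 1 - n)))
    (hJp : Submodule.span ℝ (Set.range fun j : ↥Jp => Yᵀ (j : Fin (m + 1 - n))) = Splus)
    (hJm : Submodule.span ℝ (Set.range fun j : ↥Jm => Yᵀ (j : Fin (m + 1 - n))) = Sminus) :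
    (-(Z.submatrix (fun j : ↥Jp => (j : Fin (m + 1 - n)))
        (fun j : ↥Jp => (j : Fin (m + 1 - n))))).PosDef
    ∧ (Z.submatrix (fun j : ↥Jm => (j : Fin (m + 1 - n)))
        (fun j : ↥Jm => (j : Fin (m + 1 - n)))).PosDef
    ∧ Module.finrank ℝ Sminus ≤ (Finset.univ.filter fun i => 0 < hZ.eigenvalues i).card
    ∧ (Finset.univ.filter fun i => 0 < hZ.eigenvalues i).card + Module.finrank ℝ Splus
        ≤ m + 1 - n :=
  cycle_form_blocks_general n m γ hγ B Y hYindep Z hZdef hZ Splus Sminus hSp hSm Jp Jm hJp hJm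
end
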